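/- Let S be a function from finite sets of integers to the reals that is translation-invariant, i.e., S(c + T) = S(T) for every integer c and finite set T, where c + T = {c + t : t ∈ T}. For integers h ≥ 2 and ℓ ≥ 1, define A(h,ℓ) = ∑ S(T) over all ℓ-element subsets T of {1,…,h−1}, and B(h,ℓ) = ∑ S({0} ∪ T) over all ℓ-element subsets T of {1,…,h−1}. Then B(h−1, ℓ−1) = A(h, ℓ) − A(h−1, ℓ). -/
import Mathlib

open Finset

theorem stmt_10 (S : Finset ℤ → ℝ)
    (hS : ∀ (c : ℤ) (T : Finset ℤ), S (T.image (· + c)) = S T)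
    (A B : ℤ → ℕ → ℝ)
    (hA : ∀ (h : ℤ) (ℓ : ℕ), A h ℓ = ∑ T ∈ (Finset.Icc 1 (h - 1)).powersetCard ℓ, S T)
    (hB : ∀ (h : ℤ) (ℓ : ℕ), B h ℓ = ∑ T ∈ (Finset.Icc 1 (h - 1)).powersetCard ℓ, S (insert 0 T))
    (h : ℤ) (ℓ : ℕ) (hh : 2 ≤ h) (hℓ : 1 ≤ ℓ) :
    B (h - 1) (ℓ - 1) = A h ℓ - A (h - 1) ℓ := by
  have hinj : Function.Injective (fun t : ℤ => t + 1) := fun a b hab => by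
    simpa using hab
  rw [hA, hA, hB]
  -- split A h ℓ
  have split : ∑ T ∈ (Icc (1:ℤ) (h-1)).powersetCard ℓ, S T
      = (∑ T ∈ ((Icc (1:ℤ) (h-1)).powersetCard ℓ).filter (fun T => (1:ℤ) ∈ T), S T)
      + ∑ T ∈ ((Icc (1:ℤ) (h-1)).powersetCard ℓ).filter (fun T => (1:ℤ) ∉ T), S T :=
    (Finset.sum_filter_add_sum_filter_not _ _ _).symm
  have hset : ((Icc (1:ℤ) (h-1)).powersetCard ℓ).filter (fun T => (1:ℤ) ∉ T)
      = (Icc (2:ℤ) (h-1)).powersetCard ℓ := by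
    ext T
    simp only [mem_filter, mem_powersetCard]
    constructor
    · rintro ⟨⟨hsub, hcard⟩, h1⟩
      refine ⟨fun x hx => ?_, hcard⟩
      have := hsub hx
      simp only [mem_Icc] at this ⊢
      have : x ≠ 1 := fun hx1 => h1 (hx1 ▸ hx)
      omega
    · rintro ⟨hsub, hcard⟩
      refine ⟨⟨fun x hx => ?_, hcard⟩, fun h1 => ?_⟩
      · have := hsub hx; simp only [mem_Icc] at this ⊢; omega
      · have := hsub h1; simp only [mem_Icc] at this; omega
  have e1 : ∑ T ∈ (Icc (1:ℤ) (h-1-1)).powersetCard ℓ, S T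
      = ∑ T ∈ (Icc (2:ℤ) (h-1)).powersetCard ℓ, S T := by
    refine Finset.sum_nbij' (i := fun T => T.image (· + 1))
      (j := fun T => T.image (· + (-1))) ?_ ?_ ?_ ?_ ?_
    · intro T hT
      simp only [mem_powersetCard] at hT ⊢
      refine ⟨fun x hx => ?_, by rw [Finset.card_image_of_injective _ hinj, hT.2]⟩
      simp only [mem_image] at hx
      obtain ⟨y, hy, rfl⟩ := hx
      have := hT.1 hy
      simp only [mem_Icc] at this ⊢
      omega
    · intro T hT
      simp only [mem_powersetCard] at hT ⊢
      have hinj' : Function.Injective (fun t : ℤ => t + (-1)) := fun a b hab => by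
        simpa using hab
      refine ⟨fun x hx => ?_, by rw [Finset.card_image_of_injective _ hinj', hT.2]⟩
      simp only [mem_image] at hx
      obtain ⟨y, hy, rfl⟩ := hx
      have := hT.1 hy
      simp only [mem_Icc] at this ⊢
      omega
    · intro T hT
      ext x
      simp only [mem_image]
      constructor
      · rintro ⟨y, ⟨z, hz, rfl⟩, rfl⟩; simpa
      · intro hx; exact ⟨x + 1, ⟨x, hx, rfl⟩, by ring⟩
    · intro T hT
      ext x
      simp only [mem_image]
      constructor
      · rintro ⟨y, ⟨z, hz, rfl⟩, rfl⟩; simpa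
      · intro hx; exact ⟨x + -1, ⟨x, hx, rfl⟩, by ring⟩
    · intro T hT
      exact (hS 1 T).symm
  have e2 : ∑ T ∈ (Icc (1:ℤ) (h-1-1)).powersetCard (ℓ-1), S (insert 0 T)
      = ∑ T ∈ ((Icc (1:ℤ) (h-1)).powersetCard ℓ).filter (fun T => (1:ℤ) ∈ T), S T := by
    refine Finset.sum_nbij' (i := fun T => (insert (0:ℤ) T).image (· + 1))
      (j := fun T => (T.erase 1).image (· + (-1))) ?_ ?_ ?_ ?_ ?_
    · intro T hT
      simp only [mem_powersetCard] at hT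
      simp only [mem_filter, mem_powersetCard]
      have h0 : (0:ℤ) ∉ T := fun h0 => by
        have := hT.1 h0; simp only [mem_Icc] at this; omega
      refine ⟨⟨fun x hx => ?_, ?_⟩, ?_⟩
      · simp only [mem_image, mem_insert] at hx
        obtain ⟨y, hy | hy, rfl⟩ := hx
        · subst hy; simp only [mem_Icc]; omega
        · have := hT.1 hy; simp only [mem_Icc] at this ⊢; omega
      · rw [Finset.card_image_of_injective _ hinj, Finset.card_insert_of_notMem h0,
          hT.2]
        omega
      · simp only [mem_image, mem_insert]
        exact ⟨0, Or.inl rfl, by ring⟩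
    · intro T hT
      simp only [mem_filter, mem_powersetCard] at hT
      simp only [mem_powersetCard]
      have hinj' : Function.Injective (fun t : ℤ => t + (-1)) := fun a b hab => by
        simpa using hab
      refine ⟨fun x hx => ?_, ?_⟩
      · simp only [mem_image, mem_erase] at hx
        obtain ⟨y, ⟨hy1, hy⟩, rfl⟩ := hx
        have := hT.1.1 hy
        simp only [mem_Icc] at this ⊢
        omega
      · rw [Finset.card_image_of_injective _ hinj', Finset.card_erase_of_mem hT.2,
          hT.1.2]
    · intro T hT
      simp only [mem_powersetCard] at hT
      have h0 : (0:ℤ) ∉ T := fun h0 => by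
        have := hT.1 h0; simp only [mem_Icc] at this; omega
      ext x
      simp only [mem_image, mem_erase, mem_insert]
      constructor
      · rintro ⟨y, ⟨hy1, z, hz | hz, rfl⟩, rfl⟩
        · omega
        · simpa
      · intro hx
        have hx1 : x + 1 ≠ 1 := by
          have := hT.1 hx; simp only [mem_Icc] at this; omega
        exact ⟨x + 1, ⟨hx1, x, Or.inr hx, rfl⟩, by ring⟩
    · intro T hT
      simp only [mem_filter, mem_powersetCard] at hT
      ext x
      simp only [mem_image, mem_insert, mem_erase]
      constructor
      · rintro ⟨y, rfl | ⟨a, ⟨ha1, ha⟩, rfl⟩, rfl⟩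
        · simpa using hT.2
        · simpa using ha
      · intro hx
        by_cases hx1 : x = 1
        · exact ⟨0, Or.inl rfl, by omega⟩
        · exact ⟨x + -1, Or.inr ⟨x, ⟨hx1, hx⟩, rfl⟩, by ring⟩
    · intro T hT
      exact (hS 1 (insert 0 T)).symm
  rw [e2, split, e1, hset]
  ring
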